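/- The function Γ₁(p) = v₀ p / (σ(−ρ + ρ̄ cot(σ ρ̄ p / 2))) is convex on its effective domain (p₋, p₊) (the maximal open interval containing 0 on which the denominator is positive), and Γ₁(p) → +∞ as p → p₊⁻. -/

import Mathlib

open Real Filter


private lemma aux_mul_cos_le_sin {v : ℝ} (h0 : 0 ≤ v) (h1 : v ≤ π / 2) :
    v * Real.cos v ≤ Real.sin v := by
  rcases eq_or_lt_of_le h0 with rfl | h0'
  · simp
  rcases eq_or_lt_of_le h1 with rfl | h1'
  · simp
  · have ht := Real.lt_tan h0' h1'
    have hc : 0 < Real.cos v :=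
      Real.cos_pos_of_mem_Ioo ⟨by linarith [Real.pi_pos], h1'⟩
    rw [Real.tan_eq_sin_div_cos, lt_div_iff₀ hc] at ht
    linarith

private lemma aux_key_pos {φ u : ℝ} (hφ0 : 0 < φ) (hφπ : φ < π)
    (hu0 : 0 < u) (huπ : u < π) :
    0 ≤ Real.sin u + (φ - u) * Real.cos u := by
  have hsin : 0 < Real.sin u := Real.sin_pos_of_pos_of_lt_pi hu0 huπ
  rcases le_total u (π / 2) with h | h
  · have hcu : 0 ≤ Real.cos u :=
      Real.cos_nonneg_of_mem_Icc ⟨by linarith [Real.pi_pos], h⟩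
    rcases le_total u φ with h2 | h2
    · nlinarith
    · have := aux_mul_cos_le_sin hu0.le h
      nlinarith
  · have hv : Real.sin u = Real.sin (π - u) := (Real.sin_pi_sub u).symm
    have hc : Real.cos u = -Real.cos (π - u) := by
      rw [Real.cos_pi_sub]; ring
    have h0v : (0:ℝ) ≤ π - u := by linarith
    have h1v : π - u ≤ π / 2 := by linarith
    have hts := aux_mul_cos_le_sin h0v h1v
    have hcv : 0 ≤ Real.cos (π - u) :=
      Real.cos_nonneg_of_mem_Icc ⟨by linarith [Real.pi_pos], h1v⟩
    rcases le_total φ u with h2 | h2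
    · nlinarith
    · nlinarith

noncomputable def gfun (φ : ℝ) : ℝ → ℝ := fun θ => θ * Real.sin θ / Real.sin (φ - θ)

noncomputable def g1fun (φ : ℝ) : ℝ → ℝ := fun θ =>
  ((Real.sin θ + θ * Real.cos θ) * Real.sin (φ - θ) + θ * Real.sin θ * Real.cos (φ - θ)) /
    (Real.sin (φ - θ)) ^ 2

noncomputable def g2fun (φ : ℝ) : ℝ → ℝ := fun θ =>
  2 * Real.sin φ * (Real.sin (φ - θ) + θ * Real.cos (φ - θ)) / (Real.sin (φ - θ)) ^ 3

lemma hasDerivAt_sin_sub (φ θ : ℝ) :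
    HasDerivAt (fun x => Real.sin (φ - x)) (-Real.cos (φ - θ)) θ := by
  simpa [Function.comp_def] using (Real.hasDerivAt_sin (φ - θ)).comp θ ((hasDerivAt_id θ).const_sub φ)

lemma hasDerivAt_cos_sub (φ θ : ℝ) :
    HasDerivAt (fun x => Real.cos (φ - x)) (Real.sin (φ - θ)) θ := by
  simpa [Function.comp_def] using (Real.hasDerivAt_cos (φ - θ)).comp θ ((hasDerivAt_id θ).const_sub φ)

lemma hasDerivAt_xsin (θ : ℝ) :
    HasDerivAt (fun x : ℝ => x * Real.sin x) (Real.sin θ + θ * Real.cos θ) θ := by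
  simpa [Pi.mul_def] using (hasDerivAt_id' θ).mul (Real.hasDerivAt_sin θ)

lemma hasDerivAt_g (φ θ : ℝ) (hne : Real.sin (φ - θ) ≠ 0) :
    HasDerivAt (gfun φ) (g1fun φ θ) θ := by
  have h := (hasDerivAt_xsin θ).div (hasDerivAt_sin_sub φ θ) hne
  refine h.congr_deriv ?_
  unfold g1fun
  ring

lemma hasDerivAt_g1 (φ θ : ℝ) (hne : Real.sin (φ - θ) ≠ 0) :
    HasDerivAt (g1fun φ) (g2fun φ θ) θ := by
  have hA : HasDerivAt
      (fun x => (Real.sin x + x * Real.cos x) * Real.sin (φ - x) +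
        x * Real.sin x * Real.cos (φ - x))
      (((Real.cos θ + (1 * Real.cos θ + θ * -Real.sin θ)) * Real.sin (φ - θ) +
        (Real.sin θ + θ * Real.cos θ) * -Real.cos (φ - θ)) +
        ((Real.sin θ + θ * Real.cos θ) * Real.cos (φ - θ) +
          θ * Real.sin θ * Real.sin (φ - θ))) θ := by
    exact (((Real.hasDerivAt_sin θ).add ((hasDerivAt_id θ).mul (Real.hasDerivAt_cos θ))).mul
      (hasDerivAt_sin_sub φ θ)).add ((hasDerivAt_xsin θ).mul (hasDerivAt_cos_sub φ θ))
  have hden : HasDerivAt (fun x => (Real.sin (φ - x)) ^ 2)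
      ((2 : ℕ) * (Real.sin (φ - θ)) ^ 1 * -Real.cos (φ - θ)) θ :=
    (hasDerivAt_sin_sub φ θ).pow 2
  have h := hA.div hden (pow_ne_zero 2 hne)
  refine h.congr_deriv ?_
  unfold g2fun
  rw [show Real.sin φ = Real.sin (φ - θ) * Real.cos θ + Real.cos (φ - θ) * Real.sin θ by
    rw [← Real.sin_add]; ring_nf]
  field_simp
  ring

lemma g_convexOn (φ : ℝ) (h0 : 0 < φ) (h1 : φ < π) :
    ConvexOn ℝ (Set.Ioo (φ - π) φ) (gfun φ) := by
  have hSpos : ∀ θ ∈ Set.Ioo (φ - π) φ, 0 < Real.sin (φ - θ) := by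
    intro θ hθ
    exact Real.sin_pos_of_pos_of_lt_pi (by linarith [hθ.2]) (by linarith [hθ.1])
  have hopen : IsOpen (Set.Ioo (φ - π) φ) := isOpen_Ioo
  have hd1 : ∀ θ ∈ Set.Ioo (φ - π) φ, HasDerivAt (gfun φ) (g1fun φ θ) θ :=
    fun θ hθ => hasDerivAt_g φ θ (hSpos θ hθ).ne'
  have hderiv : ∀ θ ∈ Set.Ioo (φ - π) φ, deriv (gfun φ) θ = g1fun φ θ :=
    fun θ hθ => (hd1 θ hθ).deriv
  have hd2 : ∀ θ ∈ Set.Ioo (φ - π) φ, HasDerivAt (deriv (gfun φ)) (g2fun φ θ) θ := by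
    intro θ hθ
    have hev : deriv (gfun φ) =ᶠ[nhds θ] g1fun φ :=
      Filter.eventually_of_mem (hopen.mem_nhds hθ) hderiv
    exact (hasDerivAt_g1 φ θ (hSpos θ hθ).ne').congr_of_eventuallyEq hev
  apply convexOn_of_deriv2_nonneg' (convex_Ioo _ _)
  · exact fun θ hθ => (hd1 θ hθ).differentiableAt.differentiableWithinAt
  · exact fun θ hθ => (hd2 θ hθ).differentiableAt.differentiableWithinAt
  · intro θ hθ
    have h2 : deriv^[2] (gfun φ) θ = g2fun φ θ := by
      simp only [Function.iterate_succ, Function.iterate_zero, Function.comp_apply, id_eq]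
      exact (hd2 θ hθ).deriv
    rw [h2]
    unfold g2fun
    have hS := hSpos θ hθ
    have hkey : 0 ≤ Real.sin (φ - θ) + θ * Real.cos (φ - θ) := by
      have := aux_key_pos (φ := φ) (u := φ - θ) h0 h1 (by linarith [hθ.2]) (by linarith [hθ.1])
      have he : φ - (φ - θ) = θ := by ring
      rw [he] at this
      linarith [this]
    have hsφ : 0 < Real.sin φ := Real.sin_pos_of_pos_of_lt_pi h0 h1
    positivity

lemma g_tendsto (φ : ℝ) (h0 : 0 < φ) (h1 : φ < π) :
    Tendsto (gfun φ) (nhdsWithin φ (Set.Iio φ)) atTop := by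
  have hev : ∀ᶠ θ in nhdsWithin φ (Set.Iio φ), θ ∈ Set.Ioo (φ - π) φ := by
    filter_upwards [self_mem_nhdsWithin,
      eventually_nhdsWithin_of_eventually_nhds (eventually_gt_nhds (by linarith [Real.pi_pos] :
        φ - π < φ))] with θ h1' h2'
    exact ⟨h2', h1'⟩
  have hnum : Tendsto (fun θ => θ * Real.sin θ) (nhdsWithin φ (Set.Iio φ))
      (nhds (φ * Real.sin φ)) :=
    ((continuous_id.mul Real.continuous_sin).tendsto φ).mono_left nhdsWithin_le_nhds
  have hden : Tendsto (fun θ => Real.sin (φ - θ)) (nhdsWithin φ (Set.Iio φ))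
      (nhdsWithin 0 (Set.Ioi 0)) := by
    apply tendsto_nhdsWithin_of_tendsto_nhds_of_eventually_within
    · have : Tendsto (fun θ => Real.sin (φ - θ)) (nhds φ) (nhds (Real.sin (φ - φ))) :=
        (Real.continuous_sin.comp (continuous_const.sub continuous_id)).tendsto φ
      simpa using this.mono_left nhdsWithin_le_nhds
    · filter_upwards [hev] with θ hθ
      exact Real.sin_pos_of_pos_of_lt_pi (by linarith [hθ.2]) (by linarith [hθ.1])
  have hinv : Tendsto (fun θ => (Real.sin (φ - θ))⁻¹) (nhdsWithin φ (Set.Iio φ)) atTop :=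
    tendsto_inv_nhdsGT_zero.comp hden
  have hpos : 0 < φ * Real.sin φ :=
    mul_pos h0 (Real.sin_pos_of_pos_of_lt_pi h0 h1)
  have := hnum.pos_mul_atTop hpos hinv
  refine this.congr (fun θ => ?_)
  simp [gfun, div_eq_mul_inv]


/-- Convexity of the Heston small-time SCGF Γ₁ on its effective domain
(p₋, p₊) and blow-up Γ₁(p) → +∞ as p → p₊⁻. -/
theorem stmt_5 (v₀ σ ρ : ℝ) (hv₀ : 0 < v₀) (hσ : 0 < σ) (hρ : ρ ∈ Set.Ioo (-1 : ℝ) 1)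
    (ρ' : ℝ) (hρ' : ρ' = Real.sqrt (1 - ρ ^ 2))
    (Γ : ℝ → ℝ)
    (hΓ : Γ = fun p => if p = 0 then 0 else
      v₀ * p / (σ * (-ρ + ρ' * Real.cot (σ * ρ' * p / 2))))
    (pm pp : ℝ)
    (hpm : pm = if ρ < 0 then (2 / (σ * ρ')) * Real.arctan (ρ' / ρ)
      else if ρ = 0 then -π / σ
      else (2 / (σ * ρ')) * (-π + Real.arctan (ρ' / ρ)))
    (hpp : pp = if ρ < 0 then (2 / (σ * ρ')) * (π + Real.arctan (ρ' / ρ))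
      else if ρ = 0 then π / σ
      else (2 / (σ * ρ')) * Real.arctan (ρ' / ρ)) :
    ConvexOn ℝ (Set.Ioo pm pp) Γ ∧
    Tendsto Γ (nhdsWithin pp (Set.Iio pp)) atTop := by
  obtain ⟨hρ1, hρ2⟩ := hρ
  set φ := Real.arccos ρ with hφ
  have hφ0 : 0 < φ := Real.arccos_pos.mpr hρ2
  have hφπ : φ < π := by
    refine lt_of_le_of_ne (Real.arccos_le_pi ρ) fun h => ?_
    have := Real.arccos_eq_pi.mp h
    linarith
  have hρ'sin : ρ' = Real.sin φ := by rw [hρ', hφ, Real.sin_arccos]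
  have hρcos : ρ = Real.cos φ := (Real.cos_arccos hρ1.le hρ2.le).symm
  have hρ'pos : 0 < ρ' := by
    rw [hρ'sin]; exact Real.sin_pos_of_pos_of_lt_pi hφ0 hφπ
  set a := σ * ρ' / 2 with ha
  have hapos : 0 < a := by positivity
  have hσρ' : σ * ρ' ≠ 0 := by positivity
  -- boundary identities
  have harc : ∀ x : ℝ, a * (2 / (σ * ρ') * x) = x := by
    intro x; field_simp [ha]; ring
  have hatan : ρ < 0 → Real.arctan (ρ' / ρ) = φ - π := by
    intro h
    have h1 : Real.arccos (-ρ) = Real.arctan (Real.sqrt (1 - (-ρ) ^ 2) / (-ρ)) :=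
      Real.arccos_eq_arctan (by linarith)
    rw [Real.arccos_neg, show (1 : ℝ) - (-ρ) ^ 2 = 1 - ρ ^ 2 by ring, ← hρ',
      show ρ' / -ρ = -(ρ' / ρ) by ring, Real.arctan_neg] at h1
    rw [← hφ] at h1
    linarith
  have hptan : 0 < ρ → Real.arctan (ρ' / ρ) = φ := by
    intro h
    rw [hφ, Real.arccos_eq_arctan h, ← hρ']
  have hpm' : a * pm = φ - π := by
    rcases lt_trichotomy ρ 0 with h | h | h
    · rw [hpm, if_pos h, harc, hatan h]
    · subst h
      rw [hpm, if_neg (lt_irrefl 0), if_pos rfl]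
      have : ρ' = 1 := by rw [hρ']; norm_num
      rw [hφ, Real.arccos_zero, ha, this]
      field_simp
      ring
    · rw [hpm, if_neg (not_lt.mpr h.le), if_neg h.ne', harc, hptan h]
      ring
  have hpp' : a * pp = φ := by
    rcases lt_trichotomy ρ 0 with h | h | h
    · rw [hpp, if_pos h, harc, hatan h]; ring
    · subst h
      rw [hpp, if_neg (lt_irrefl 0), if_pos rfl]
      have : ρ' = 1 := by rw [hρ']; norm_num
      rw [hφ, Real.arccos_zero, ha, this]
      field_simp
    · rw [hpp, if_neg (not_lt.mpr h.le), if_neg h.ne', harc, hptan h]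
  set K := 2 * v₀ / (σ ^ 2 * ρ') with hK
  have hKpos : 0 < K := by positivity
  have hmem : ∀ p ∈ Set.Ioo pm pp, a * p ∈ Set.Ioo (φ - π) φ := by
    intro p hp
    constructor
    · rw [← hpm']; exact (mul_lt_mul_iff_right₀ hapos).mpr hp.1
    · rw [← hpp']; exact (mul_lt_mul_iff_right₀ hapos).mpr hp.2
  -- Γ agrees with K • gfun φ ∘ (a * ·) on the domain
  have hΓeq : ∀ p ∈ Set.Ioo pm pp, Γ p = K * gfun φ (a * p) := by
    intro p hp
    have hθ := hmem p hp
    by_cases hp0 : p = 0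
    · subst hp0
      simp [hΓ, gfun]
    · have hsθ : Real.sin (a * p) ≠ 0 := by
        intro h
        exact mul_ne_zero hapos.ne' hp0
          ((Real.sin_eq_zero_iff_of_lt_of_lt (by linarith [hθ.1, Real.pi_pos])
            (by linarith [hθ.2])).mp h)
      have hSθ : Real.sin (φ - a * p) ≠ 0 := by
        refine (Real.sin_pos_of_pos_of_lt_pi ?_ ?_).ne' <;>
          [linarith [hθ.2]; linarith [hθ.1]]
      rw [hΓ]
      simp only [if_neg hp0]
      rw [show σ * ρ' * p / 2 = a * p by rw [ha]; ring, Real.cot_eq_cos_div_sin]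
      have hden : -ρ + ρ' * (Real.cos (a * p) / Real.sin (a * p)) =
          Real.sin (φ - a * p) / Real.sin (a * p) := by
        rw [Real.sin_sub, hρcos, hρ'sin]
        field_simp
        ring
      rw [hden]
      unfold gfun
      set s1 := Real.sin (a * p) with hs1
      set S1 := Real.sin (φ - a * p) with hS1
      rw [hK, ha]
      field_simp
  constructor
  · -- convexity
    have hg := g_convexOn φ hφ0 hφπ
    refine ⟨convex_Ioo _ _, ?_⟩
    intro x hx y hy t s ht hs hts
    have hxy : t • x + s • y ∈ Set.Ioo pm pp :=
      (convex_Ioo pm pp) hx hy ht hs hts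
    simp only [smul_eq_mul] at *
    rw [hΓeq x hx, hΓeq y hy, hΓeq _ hxy]
    have h2 := hg.2 (hmem x hx) (hmem y hy) ht hs hts
    simp only [smul_eq_mul] at h2
    rw [show a * (t * x + s * y) = t * (a * x) + s * (a * y) by ring]
    nlinarith [mul_le_mul_of_nonneg_left h2 hKpos.le]
  · -- blow-up
    have hgt := g_tendsto φ hφ0 hφπ
    have hmap : Tendsto (fun p => a * p) (nhdsWithin pp (Set.Iio pp))
        (nhdsWithin φ (Set.Iio φ)) := by
      apply tendsto_nhdsWithin_of_tendsto_nhds_of_eventually_within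
      · have : Tendsto (fun p => a * p) (nhds pp) (nhds (a * pp)) :=
          (continuous_const.mul continuous_id).tendsto pp
        rw [hpp'] at this
        exact this.mono_left nhdsWithin_le_nhds
      · filter_upwards [self_mem_nhdsWithin] with p hp
        rw [← hpp']
        exact (mul_lt_mul_iff_right₀ hapos).mpr hp
    have hcomp : Tendsto (fun p => K * gfun φ (a * p)) (nhdsWithin pp (Set.Iio pp)) atTop :=
      (hgt.comp hmap).const_mul_atTop hKpos
    refine hcomp.congr' ?_
    have hpmpp : pm < pp := by
      have : a * pm < a * pp := by rw [hpm', hpp']; linarith [Real.pi_pos]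
      exact lt_of_mul_lt_mul_left this hapos.le
    filter_upwards [self_mem_nhdsWithin,
      eventually_nhdsWithin_of_eventually_nhds (eventually_gt_nhds hpmpp)] with p h1' h2'
    exact (hΓeq p ⟨h2', h1'⟩).symm
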